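/- arXiv:1604.01868 — 2 statements merged into one kernel-verified Lean document; each statement's English description precedes it below -/
import Mathlib

section
/- Let n ≥ 1 be an integer and let a_1, …, a_n be integers with a_i ≤ −2 for every i. Then the symmetric n × n real tridiagonal matrix M defined by M_{ii} = a_i, M_{ij} = 1 when |i − j| = 1, and M_{ij} = 0 when |i − j| ≥ 2, is negative definite. -/
/-!
For a symmetric matrix with row sums `r i`,
`2 xᵀ M x = 2 ∑ r i * x i ^ 2 - ∑ i j, M i j * (x i - x j) ^ 2`.
For the plumbing matrix the off-diagonal entries are nonnegative and `r i ≤ a i + 2 ≤ 0`, with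
`r 0 ≤ a 0 + 1 < 0` at the end of the chain, so both parts are `≤ 0`. If the second vanishes,
`x` is constant along the chain, and then the first is `< 0` unless `x 0 = 0`, i.e. `x = 0`.
-/

open Matrix Finset

theorem Matrix.IsSymm.two_mul_dotProduct_mulVec_self {ι R : Type*} [Fintype ι] [CommRing R]
    {M : Matrix ι ι R} (hM : M.IsSymm) (x : ι → R) :
    2 * (x ⬝ᵥ M *ᵥ x) =
      2 * ∑ i, (∑ j, M i j) * x i ^ 2 - ∑ i, ∑ j, M i j * (x i - x j) ^ 2 := by
  have hswap : ∑ i, ∑ j, M i j * x j ^ 2 = ∑ i, (∑ j, M i j) * x i ^ 2 := by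
    rw [sum_comm]
    simp only [sum_mul, hM.apply]
  have hexpand : ∑ i, ∑ j, M i j * (x i - x j) ^ 2 =
      ∑ i, (∑ j, M i j) * x i ^ 2 + ∑ i, ∑ j, M i j * x j ^ 2
        - 2 * ∑ i, ∑ j, x i * (M i j * x j) := by
    simp only [sum_mul, mul_sum, ← sum_add_distrib, ← sum_sub_distrib]
    refine sum_congr rfl fun i _ => sum_congr rfl fun j _ => by ring
  have hquad : x ⬝ᵥ M *ᵥ x = ∑ i, ∑ j, x i * (M i j * x j) := by
    simp only [dotProduct, mulVec, mul_sum]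
  rw [hexpand, hswap, hquad]
  ring

theorem Fin.apply_eq_apply_zero_of_castSucc_eq_succ {α : Type*} {m : ℕ} {x : Fin (m + 1) → α}
    (hx : ∀ i : Fin m, x i.castSucc = x i.succ) (j : Fin (m + 1)) : x j = x 0 := by
  induction j using Fin.induction with
  | zero => rfl
  | succ i ih => rw [← hx i, ih]

theorem Fin.sum_ite_val_eq_le_one (n k : ℕ) :
    ∑ j : Fin n, (if (j : ℕ) = k then (1 : ℝ) else 0) ≤ 1 := by
  rw [Fin.sum_univ_eq_sum_range (fun j => if j = k then (1 : ℝ) else 0), sum_ite_eq']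
  split_ifs <;> norm_num

theorem Matrix.dotProduct_mulVec_self_neg_of_rowSum_nonpos {m : ℕ}
    {M : Matrix (Fin (m + 1)) (Fin (m + 1)) ℝ} (hM : M.IsSymm)
    (hoff : ∀ i j, i ≠ j → 0 ≤ M i j) (hrow : ∀ i, ∑ j, M i j ≤ 0)
    (hrow₀ : ∑ j, M 0 j < 0) (hpath : ∀ i : Fin m, 0 < M i.castSucc i.succ)
    {x : Fin (m + 1) → ℝ} (hx : x ≠ 0) : x ⬝ᵥ M *ᵥ x < 0 := by
  have hterm : ∀ i j, 0 ≤ M i j * (x i - x j) ^ 2 := fun i j => by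
    rcases eq_or_ne i j with rfl | hij
    · simp
    · exact mul_nonneg (hoff i j hij) (sq_nonneg _)
  have hrowSum : ∀ i, 0 ≤ ∑ j, M i j * (x i - x j) ^ 2 := fun i =>
    sum_nonneg fun j _ => hterm i j
  have hQ : ∑ i, (∑ j, M i j) * x i ^ 2 ≤ (∑ j, M 0 j) * x 0 ^ 2 := by
    rw [Fin.sum_univ_succ, add_le_iff_nonpos_right]
    exact sum_nonpos fun i _ => mul_nonpos_of_nonpos_of_nonneg (hrow _) (sq_nonneg _)
  suffices hcases :
      ∑ i, (∑ j, M i j) * x i ^ 2 < 0 ∨ 0 < ∑ i, ∑ j, M i j * (x i - x j) ^ 2 by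
    have hD := sum_nonneg fun i (_ : i ∈ univ) => hrowSum i
    have hQ' := hQ.trans (mul_nonpos_of_nonpos_of_nonneg hrow₀.le (sq_nonneg (x 0)))
    have hid := hM.two_mul_dotProduct_mulVec_self x
    rcases hcases with h | h <;> linarith
  by_cases hx₀ : x 0 = 0
  · obtain ⟨i, hi⟩ : ∃ i : Fin m, x i.castSucc ≠ x i.succ := by
      by_contra! hconst
      refine hx (funext fun j => ?_)
      rw [Fin.apply_eq_apply_zero_of_castSucc_eq_succ hconst j, hx₀, Pi.zero_apply]
    right
    calc 0 < M i.castSucc i.succ * (x i.castSucc - x i.succ) ^ 2 :=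
          mul_pos (hpath i) (sq_pos_of_ne_zero (sub_ne_zero.mpr hi))
      _ ≤ ∑ j, M i.castSucc j * (x i.castSucc - x j) ^ 2 :=
          single_le_sum (fun j _ => hterm _ j) (mem_univ _)
      _ ≤ ∑ i, ∑ j, M i j * (x i - x j) ^ 2 :=
          single_le_sum (fun i _ => hrowSum i) (mem_univ _)
  · left
    exact hQ.trans_lt (mul_neg_of_neg_of_pos hrow₀ (sq_pos_of_ne_zero hx₀))

def linearPlumbing {n : ℕ} (a : Fin n → ℝ) : Matrix (Fin n) (Fin n) ℝ :=
  Matrix.of fun i j => if i = j then a i else if ((i : ℤ) - (j : ℤ)).natAbs = 1 then 1 else 0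

namespace linearPlumbing

variable {n : ℕ} (a : Fin n → ℝ)

theorem isSymm : (linearPlumbing a).IsSymm := by
  refine Matrix.IsSymm.ext fun i j => ?_
  simp only [linearPlumbing, of_apply, eq_comm (a := j)]
  split_ifs <;> subst_vars <;> first | rfl | omega

theorem apply_nonneg_of_ne {i j : Fin n} (hij : i ≠ j) : 0 ≤ linearPlumbing a i j := by
  simp only [linearPlumbing, of_apply, if_neg hij]
  split_ifs <;> norm_num

theorem apply_castSucc_succ {m : ℕ} (a : Fin (m + 1) → ℝ) (i : Fin m) :
    linearPlumbing a i.castSucc i.succ = 1 := by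
  simp [linearPlumbing, i.castSucc_lt_succ.ne]

theorem sum_apply_le (i : Fin n) : ∑ j, linearPlumbing a i j ≤ a i + 2 := by
  have hbound : ∀ j, linearPlumbing a i j ≤ (if i = j then a i else 0) +
      ((if (j : ℕ) = i + 1 then 1 else 0) + (if (j : ℕ) = i - 1 then 1 else 0)) := fun j => by
    simp only [linearPlumbing, of_apply, Fin.ext_iff]
    split_ifs <;> first | omega | norm_num
  calc ∑ j, linearPlumbing a i j ≤ a i + (1 + 1) := by
        refine (sum_le_sum fun j _ => hbound j).trans ?_
        rw [sum_add_distrib, sum_ite_eq, if_pos (mem_univ _), sum_add_distrib]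
        gcongr <;> exact Fin.sum_ite_val_eq_le_one _ _
    _ = a i + 2 := by norm_num

theorem sum_apply_zero_le {m : ℕ} (a : Fin (m + 1) → ℝ) :
    ∑ j, linearPlumbing a 0 j ≤ a 0 + 1 := by
  have hbound : ∀ j, linearPlumbing a 0 j ≤
      (if 0 = j then a 0 else 0) + (if (j : ℕ) = 1 then 1 else 0) := fun j => by
    simp only [linearPlumbing, of_apply, Fin.ext_iff]
    split_ifs <;> simp only [Fin.val_zero] at * <;> first | omega | norm_num
  refine (sum_le_sum fun j _ => hbound j).trans ?_
  rw [sum_add_distrib, sum_ite_eq, if_pos (mem_univ _)]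
  gcongr
  exact Fin.sum_ite_val_eq_le_one _ _

end linearPlumbing

theorem statement4_general (n : ℕ) (a : Fin n → ℤ) (ha : ∀ i, a i ≤ -2)
    (M : Matrix (Fin n) (Fin n) ℝ)
    (hM : ∀ i j : Fin n, M i j =
      if i = j then (a i : ℝ) else if ((i : ℤ) - (j : ℤ)).natAbs = 1 then 1 else 0) :
    ∀ x : Fin n → ℝ, x ≠ 0 → x ⬝ᵥ M.mulVec x < 0 := by
  intro x hx
  obtain rfl : M = linearPlumbing (fun i => (a i : ℝ)) := Matrix.ext hM
  have ha' (i : Fin n) : (a i : ℝ) ≤ -2 := by exact_mod_cast ha i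
  cases n with
  | zero => exact absurd (Subsingleton.elim x 0) hx
  | succ m =>
    refine dotProduct_mulVec_self_neg_of_rowSum_nonpos (linearPlumbing.isSymm _)
      (fun i j => linearPlumbing.apply_nonneg_of_ne _) (fun i => ?_) ?_ (fun i => ?_) hx
    · linarith [linearPlumbing.sum_apply_le (fun i => (a i : ℝ)) i, ha' i]
    · linarith [linearPlumbing.sum_apply_zero_le (fun i => (a i : ℝ)), ha' 0]
    · rw [linearPlumbing.apply_castSucc_succ]
      exact one_pos

/-- The symmetric tridiagonal intersection form of a linear plumbing tree with
vertex weights `a_1, …, a_n`, all `≤ -2`, is negative definite. -/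
theorem statement4 (n : ℕ) (hn : 1 ≤ n) (a : Fin n → ℤ) (ha : ∀ i, a i ≤ -2)
    (M : Matrix (Fin n) (Fin n) ℝ)
    (hM : ∀ i j : Fin n, M i j =
      if i = j then (a i : ℝ) else if ((i : ℤ) - (j : ℤ)).natAbs = 1 then 1 else 0) :
    ∀ x : Fin n → ℝ, x ≠ 0 → x ⬝ᵥ M.mulVec x < 0 :=
  statement4_general n a ha M hM
end

section
/- Let F = ℤ/2ℤ, let I be a finite index set, let V be the F-vector space with basis (y_i)_{i ∈ I}, and let ∂ : V → V be an F-linear map with ∂ ∘ ∂ = 0. For i, j ∈ I write d(y_i, y_j) ∈ F for the y_j-coordinate of ∂(y_i) in the given basis. Suppose k, l ∈ I are distinct indices with d(y_k, y_l) = 1. Let W be the F-vector space with basis (y_i)_{i ∈ I, i ≠ k, l}, let π : V → W be the F-linear projection sending y_i to y_i for i ≠ k, l and sending y_k and y_l to 0, and define the F-linear map ∂̄ : W → W by ∂̄(y_i) = π(∂(y_i) + d(y_i, y_l)·∂(y_k)) for i ≠ k, l. Then ∂̄ ∘ ∂̄ = 0, and (W, ∂̄) is chain homotopy equivalent to (V,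 ∂): there exist F-linear maps p : V → W and ι : W → V with p ∘ ∂ = ∂̄ ∘ p and ι ∘ ∂̄ = ∂ ∘ ι, together with an F-linear map h : V → V such that p ∘ ι = id_W and ι ∘ p + id_V = ∂ ∘ h + h ∘ ∂. -/
/-!
Let `h v = v l • y_k`. Since `∂² = 0`, `h² = 0` and `h ∂ h = d(y_k, y_l) • h = h`, the operator
`∂h + h∂` is an idempotent commuting with `∂`, so `Φ = 1 - (∂h + h∂)` is an idempotent chain map
homotopic to the identity. `Φ` kills `y_k` and has image in `{v | v l = 0}`, so it factors as
`Φ = ι ∘ p` through `W` with `p = π ∘ Φ`, `ι = Φ ∘ ext` and `p ∘ ι = 1`. Transporting `∂` along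
this retraction gives `∂̄ = p ∂ ι = π (∂ - ∂h∂) ext`, which is the stated formula over `ℤ/2`.
-/

section InducedDifferential

variable {R V W : Type*} [Semiring R] [AddCommMonoid V] [AddCommMonoid W] [Module R V]
  [Module R W] {D : V →ₗ[R] V} {p : V →ₗ[R] W} {ι : W →ₗ[R] V}

def inducedDiff (p : V →ₗ[R] W) (ι : W →ₗ[R] V) (D : V →ₗ[R] V) : W →ₗ[R] W :=
  p ∘ₗ D ∘ₗ ι

theorem inducedDiff_comp_self (hD : D ∘ₗ D = 0) (hcomm : (ι ∘ₗ p) ∘ₗ D = D ∘ₗ ι ∘ₗ p) :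
    inducedDiff p ι D ∘ₗ inducedDiff p ι D = 0 := by
  ext w
  have hDD (v : V) : D (D v) = 0 := congr($hD v)
  have hcomm_w : ι (p (D (ι w))) = D (ι (p (ι w))) := congr($hcomm (ι w))
  simp only [inducedDiff, LinearMap.comp_apply, hcomm_w, hDD, map_zero, LinearMap.zero_apply]

theorem comp_eq_inducedDiff_comp (hpι : p ∘ₗ ι = LinearMap.id)
    (hcomm : (ι ∘ₗ p) ∘ₗ D = D ∘ₗ ι ∘ₗ p) :
    p ∘ₗ D = inducedDiff p ι D ∘ₗ p := by
  calc p ∘ₗ D = p ∘ₗ (ι ∘ₗ p) ∘ₗ D := by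
        rw [← LinearMap.comp_assoc, ← LinearMap.comp_assoc, hpι, LinearMap.id_comp]
    _ = inducedDiff p ι D ∘ₗ p := by rw [hcomm]; rfl

theorem comp_inducedDiff (hpι : p ∘ₗ ι = LinearMap.id)
    (hcomm : (ι ∘ₗ p) ∘ₗ D = D ∘ₗ ι ∘ₗ p) :
    ι ∘ₗ inducedDiff p ι D = D ∘ₗ ι := by
  calc ι ∘ₗ inducedDiff p ι D = ((ι ∘ₗ p) ∘ₗ D) ∘ₗ ι := rfl
    _ = D ∘ₗ ι := by rw [hcomm]; simp only [LinearMap.comp_assoc, hpι, LinearMap.comp_id]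

end InducedDifferential

section Ring

variable {A : Type*} [Semiring A] {d h : A}

theorem isIdempotentElem_mul_add_mul (hd : d * d = 0) (hh : h * h = 0) (hhdh : h * d * h = h) :
    IsIdempotentElem (d * h + h * d) := by
  have h₁ : d * h * (d * h) = d * h := by rw [mul_assoc d h, ← mul_assoc h d h, hhdh]
  have h₂ : h * d * (h * d) = h * d := by rw [← mul_assoc, hhdh]
  have h₃ : d * h * (h * d) = 0 := by rw [mul_assoc, ← mul_assoc h, hh, zero_mul, mul_zero]
  have h₄ : h * d * (d * h) = 0 := by rw [mul_assoc, ← mul_assoc d, hd, zero_mul, mul_zero]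
  rw [IsIdempotentElem, add_mul, mul_add, mul_add, h₁, h₂, h₃, h₄, zero_add, add_zero]

theorem commute_mul_add_mul (hd : d * d = 0) : Commute d (d * h + h * d) := by
  simp only [Commute, SemiconjBy, mul_add, add_mul, ← mul_assoc, hd, zero_mul, mul_assoc h,
    mul_zero, zero_add, add_zero]

end Ring

section PairComplement

variable (R : Type*) {I : Type*} [CommRing R] (k l : I)

def pairRestrict : (I → R) →ₗ[R] ({i : I // i ≠ k ∧ i ≠ l} → R) :=
  LinearMap.funLeft R R Subtype.val

noncomputable def pairExtend : ({i : I // i ≠ k ∧ i ≠ l} → R) →ₗ[R] (I → R) :=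
  Function.ExtendByZero.linearMap R Subtype.val

theorem pairExtend_apply_val (w : {i : I // i ≠ k ∧ i ≠ l} → R) (i : {i : I // i ≠ k ∧ i ≠ l}) :
    pairExtend R k l w i = w i :=
  Subtype.val_injective.extend_apply w 0 i

theorem pairExtend_apply_of_not (w : {i : I // i ≠ k ∧ i ≠ l} → R) {j : I}
    (hj : ¬(j ≠ k ∧ j ≠ l)) : pairExtend R k l w j = 0 :=
  Function.extend_apply' _ _ _ fun ⟨i, hi⟩ => hj (hi ▸ i.2)

theorem pairRestrict_comp_pairExtend :
    pairRestrict R k l ∘ₗ pairExtend R k l = LinearMap.id := by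
  ext w i
  exact pairExtend_apply_val R k l _ i

theorem pairExtend_single [DecidableEq I] (i : {i : I // i ≠ k ∧ i ≠ l}) :
    pairExtend R k l (Pi.single i 1) = Pi.single i.1 1 := by
  ext j
  by_cases hj : j ≠ k ∧ j ≠ l
  · rw [pairExtend_apply_val R k l _ ⟨j, hj⟩]
    simp [Pi.single_apply, Subtype.ext_iff]
  · rw [pairExtend_apply_of_not R k l _ hj, Pi.single_eq_of_ne]
    rintro rfl
    exact hj i.2

end PairComplement

section MatrixUnit

variable {R I : Type*} [CommRing R] [DecidableEq I]

def matrixUnit (k l : I) : Module.End R (I → R) :=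
  (LinearMap.proj l).smulRight (Pi.single k 1)

@[simp]
theorem matrixUnit_apply (k l : I) (v : I → R) : matrixUnit k l v = v l • Pi.single k 1 := rfl

theorem matrixUnit_mul_mul_matrixUnit (T : Module.End R (I → R)) (k l i j : I) :
    matrixUnit k l * T * matrixUnit i j = T (Pi.single i 1) l • matrixUnit k j := by
  ext v m
  simp only [Module.End.mul_apply, matrixUnit_apply, map_smul, LinearMap.smul_apply,
    Pi.smul_apply, smul_eq_mul]
  ring

theorem matrixUnit_mul_matrixUnit_of_ne {k l i j : I} (h : l ≠ i) :
    matrixUnit (R := R) k l * matrixUnit i j = 0 := by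
  simpa [Pi.single_eq_of_ne h] using matrixUnit_mul_mul_matrixUnit (R := R) 1 k l i j

variable (R) (k l : I)

theorem pairExtend_comp_pairRestrict (hkl : k ≠ l) :
    pairExtend R k l ∘ₗ pairRestrict R k l = 1 - matrixUnit k k - matrixUnit l l := by
  ext v j
  by_cases hj : j ≠ k ∧ j ≠ l
  · simp [pairExtend_apply_val R k l _ ⟨j, hj⟩, pairRestrict, Pi.single_eq_of_ne hj.1,
      Pi.single_eq_of_ne hj.2]
  · rw [LinearMap.comp_apply, pairExtend_apply_of_not R k l _ hj]
    obtain rfl | rfl : j = k ∨ j = l := by tauto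
    all_goals simp [hkl, hkl.symm]

theorem matrixUnit_comp_pairExtend (i : I) : matrixUnit i l ∘ₗ pairExtend R k l = 0 := by
  ext w
  simp [pairExtend_apply_of_not R k l _ (j := l) (by simp)]

theorem pairRestrict_comp_matrixUnit (j : I) : pairRestrict R k l ∘ₗ matrixUnit k j = 0 := by
  ext v i
  simp [pairRestrict, Pi.single_eq_of_ne i.2.1]

end MatrixUnit

section GaussianElimination

variable {R I : Type*} [CommRing R] [DecidableEq I] (D : Module.End R (I → R)) (k l : I)

def gaussRetraction : Module.End R (I → R) :=
  1 - (D * matrixUnit k l + matrixUnit k l * D)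

noncomputable def gaussProj : (I → R) →ₗ[R] ({i : I // i ≠ k ∧ i ≠ l} → R) :=
  pairRestrict R k l ∘ₗ gaussRetraction D k l

noncomputable def gaussIncl : ({i : I // i ≠ k ∧ i ≠ l} → R) →ₗ[R] (I → R) :=
  gaussRetraction D k l ∘ₗ pairExtend R k l

variable {D k l}

theorem commute_gaussRetraction (hD : D * D = 0) : Commute D (gaussRetraction D k l) :=
  (Commute.one_right D).sub_right (commute_mul_add_mul hD)

variable (hkl : k ≠ l) (hd : D (Pi.single k 1) l = 1)
include hkl hd

theorem isIdempotentElem_gaussRetraction (hD : D * D = 0) :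
    IsIdempotentElem (gaussRetraction D k l) := by
  refine (isIdempotentElem_mul_add_mul hD (matrixUnit_mul_matrixUnit_of_ne hkl.symm) ?_).one_sub
  rw [matrixUnit_mul_mul_matrixUnit, hd, one_smul]

theorem gaussRetraction_mul_matrixUnit : gaussRetraction D k l * matrixUnit k k = 0 := by
  rw [gaussRetraction, sub_mul, add_mul, one_mul, mul_assoc,
    matrixUnit_mul_matrixUnit_of_ne hkl.symm, mul_zero, zero_add, matrixUnit_mul_mul_matrixUnit,
    hd, one_smul, sub_self]

theorem matrixUnit_mul_gaussRetraction : matrixUnit l l * gaussRetraction D k l = 0 := by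
  rw [gaussRetraction, mul_sub, mul_add, mul_one, ← mul_assoc, ← mul_assoc,
    matrixUnit_mul_matrixUnit_of_ne hkl.symm, zero_mul, add_zero, matrixUnit_mul_mul_matrixUnit,
    hd, one_smul, sub_self]

theorem gaussIncl_comp_gaussProj (hD : D * D = 0) :
    gaussIncl D k l ∘ₗ gaussProj D k l = gaussRetraction D k l := by
  have hΦ := isIdempotentElem_gaussRetraction hkl hd hD
  change gaussRetraction D k l * (pairExtend R k l ∘ₗ pairRestrict R k l) *
    gaussRetraction D k l = _
  rw [pairExtend_comp_pairRestrict R k l hkl, mul_sub, mul_sub, sub_mul, sub_mul, mul_one,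
    hΦ.eq, gaussRetraction_mul_matrixUnit hkl hd, mul_assoc, matrixUnit_mul_gaussRetraction hkl hd,
    zero_mul, mul_zero, sub_zero, sub_zero]

theorem gaussProj_comp_gaussIncl (hD : D * D = 0) :
    gaussProj D k l ∘ₗ gaussIncl D k l = LinearMap.id := by
  have hΦ := isIdempotentElem_gaussRetraction hkl hd hD
  change pairRestrict R k l ∘ₗ (gaussRetraction D k l * gaussRetraction D k l) ∘ₗ
    pairExtend R k l = _
  rw [hΦ.eq, gaussRetraction, LinearMap.sub_comp, LinearMap.comp_sub, LinearMap.add_comp,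
    LinearMap.comp_add, Module.End.mul_eq_comp, Module.End.mul_eq_comp, LinearMap.comp_assoc,
    LinearMap.comp_assoc, matrixUnit_comp_pairExtend, ← LinearMap.comp_assoc _ (matrixUnit k l),
    pairRestrict_comp_matrixUnit]
  simp only [LinearMap.comp_zero, LinearMap.zero_comp, add_zero, sub_zero, Module.End.one_eq_id,
    LinearMap.id_comp, pairRestrict_comp_pairExtend]

theorem inducedDiff_gaussProj_gaussIncl (hD : D * D = 0) :
    inducedDiff (gaussProj D k l) (gaussIncl D k l) D =
      pairRestrict R k l ∘ₗ (D - D * matrixUnit k l * D) ∘ₗ pairExtend R k l := by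
  have hΦ := isIdempotentElem_gaussRetraction hkl hd hD
  have hΦDΦ : gaussRetraction D k l * D * gaussRetraction D k l = D - D * matrixUnit k l * D := by
    rw [← (commute_gaussRetraction hD).eq, mul_assoc, hΦ.eq, gaussRetraction, mul_sub, mul_one,
      mul_add, ← mul_assoc, hD, zero_mul, zero_add, mul_assoc]
  exact congr(pairRestrict R k l ∘ₗ $hΦDΦ ∘ₗ pairExtend R k l)

end GaussianElimination

theorem statement6_general (I : Type*) [DecidableEq I]
    (D : (I → ZMod 2) →ₗ[ZMod 2] (I → ZMod 2))
    (hD : D ∘ₗ D = 0)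
    (k l : I) (hkl : k ≠ l)
    (hd : D (Pi.single k 1) l = 1) :
    ∃ Dbar : ({i : I // i ≠ k ∧ i ≠ l} → ZMod 2) →ₗ[ZMod 2]
        ({i : I // i ≠ k ∧ i ≠ l} → ZMod 2),
      (∀ i : {i : I // i ≠ k ∧ i ≠ l},
        Dbar (Pi.single i 1) =
          LinearMap.funLeft (ZMod 2) (ZMod 2) Subtype.val
            (D (Pi.single i.1 1) + (D (Pi.single i.1 1) l) • D (Pi.single k 1))) ∧
      Dbar ∘ₗ Dbar = 0 ∧
      ∃ (p : (I → ZMod 2) →ₗ[ZMod 2] ({i : I // i ≠ k ∧ i ≠ l} → ZMod 2))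
        (ι : ({i : I // i ≠ k ∧ i ≠ l} → ZMod 2) →ₗ[ZMod 2] (I → ZMod 2))
        (h : (I → ZMod 2) →ₗ[ZMod 2] (I → ZMod 2)),
        p ∘ₗ D = Dbar ∘ₗ p ∧
        ι ∘ₗ Dbar = D ∘ₗ ι ∧
        p ∘ₗ ι = LinearMap.id ∧
        ι ∘ₗ p + LinearMap.id = D ∘ₗ h + h ∘ₗ D := by
  have hιp := gaussIncl_comp_gaussProj hkl hd hD
  have hpι := gaussProj_comp_gaussIncl hkl hd hD
  have hcomm :
      (gaussIncl D k l ∘ₗ gaussProj D k l) ∘ₗ D = D ∘ₗ gaussIncl D k l ∘ₗ gaussProj D k l := by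
    rw [hιp]
    exact (commute_gaussRetraction hD).eq.symm
  refine ⟨inducedDiff (gaussProj D k l) (gaussIncl D k l) D, fun i => ?_,
    inducedDiff_comp_self hD hcomm, gaussProj D k l, gaussIncl D k l, matrixUnit k l,
    comp_eq_inducedDiff_comp hpι hcomm, comp_inducedDiff hpι hcomm, hpι, ?_⟩
  · rw [inducedDiff_gaussProj_gaussIncl hkl hd hD]
    simp only [ZModModule.sub_eq_add, LinearMap.comp_apply, pairExtend_single, LinearMap.add_apply,
      Module.End.mul_apply, matrixUnit_apply, map_smul]
    rfl
  · rw [hιp, gaussRetraction, ← Module.End.one_eq_id, ZModModule.sub_eq_add, add_right_comm,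
      ZModModule.add_self, zero_add]
    rfl

/-- Gaussian-elimination reduction lemma for chain complexes over `F = ℤ/2ℤ`
(Rasmussen, Lemma 5.1).  Let `V` be the `F`-vector space with finite basis
`(y_i)_{i ∈ I}` (modelled as `I → ZMod 2` with basis `Pi.single i 1`), and let
`D : V →ₗ V` be a differential (`D ∘ D = 0`).  Write `d(y_i, y_j) = D(y_i) j`.
Given distinct `k, l ∈ I` with `d(y_k, y_l) = 1`, the complex `(W, Dbar)` on the
basis `(y_i)_{i ≠ k, l}`, where `Dbar(y_i) = π(D(y_i) + d(y_i, y_l) • D(y_k))`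
and `π` is the coordinate projection, is a chain complex (`Dbar ∘ Dbar = 0`)
chain homotopy equivalent to `(V, D)`. -/
theorem statement6 (I : Type*) [Fintype I] [DecidableEq I]
    (D : (I → ZMod 2) →ₗ[ZMod 2] (I → ZMod 2))
    (hD : D ∘ₗ D = 0)
    (k l : I) (hkl : k ≠ l)
    (hd : D (Pi.single k 1) l = 1) :
    ∃ Dbar : ({i : I // i ≠ k ∧ i ≠ l} → ZMod 2) →ₗ[ZMod 2]
        ({i : I // i ≠ k ∧ i ≠ l} → ZMod 2),
      (∀ i : {i : I // i ≠ k ∧ i ≠ l},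
        Dbar (Pi.single i 1) =
          LinearMap.funLeft (ZMod 2) (ZMod 2) Subtype.val
            (D (Pi.single i.1 1) + (D (Pi.single i.1 1) l) • D (Pi.single k 1))) ∧
      Dbar ∘ₗ Dbar = 0 ∧
      ∃ (p : (I → ZMod 2) →ₗ[ZMod 2] ({i : I // i ≠ k ∧ i ≠ l} → ZMod 2))
        (ι : ({i : I // i ≠ k ∧ i ≠ l} → ZMod 2) →ₗ[ZMod 2] (I → ZMod 2))
        (h : (I → ZMod 2) →ₗ[ZMod 2] (I → ZMod 2)),
        p ∘ₗ D = Dbar ∘ₗ p ∧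
        ι ∘ₗ Dbar = D ∘ₗ ι ∧
        p ∘ₗ ι = LinearMap.id ∧
        ι ∘ₗ p + LinearMap.id = D ∘ₗ h + h ∘ₗ D :=
  statement6_general I D hD k l hkl hd
end
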